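/- arXiv:2002.01604 — 2 statements merged into one kernel-verified Lean document; each statement's English description precedes it below -/
import Mathlib

section
/- The lattice Λ = λℤ^d ⊕ λ̃ℤ^d with λᵀλ̃ = 2πℏ·I is maximal among subsets S of phase space satisfying ω(S,S) ⊆ 2πℏℤ: any vector X ∈ ℝ^{2d} with ω(X, K) ∈ 2πℏℤ for all K ∈ Λ must itself lie in Λ. -/
/-!
Write `λ = diag a`, `λ̃ = diag b`, so that `a i * b i = 2πℏ ≠ 0`. Testing the condition against
the lattice vectors `(λ eᵢ, 0)` and `(0, λ̃ eᵢ)` gives `x̃ᵢ aᵢ ∈ 2πℏℤ = aᵢ bᵢ ℤ` and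
`xᵢ bᵢ ∈ aᵢ bᵢ ℤ`, that is `x̃ᵢ ∈ bᵢ ℤ` and `xᵢ ∈ aᵢ ℤ`.
-/

open Matrix

section DiagonalLattice

variable {ι : Type*} [Fintype ι]

lemma dotProduct_mulVec_intCast_zero (w : ι → ℝ) (M : Matrix ι ι ℝ) :
    w ⬝ᵥ (M *ᵥ fun j => ((0 : ι → ℤ) j : ℝ)) = 0 := by
  simp [← Pi.zero_def]

variable [DecidableEq ι]

lemma dotProduct_diagonal_mulVec_intCast_single (w a : ι → ℝ) (i : ι) :
    w ⬝ᵥ (diagonal a *ᵥ fun j => ((Pi.single i 1 : ι → ℤ) j : ℝ)) = w i * a i := by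
  have hcast : (fun j => ((Pi.single i 1 : ι → ℤ) j : ℝ)) = Pi.single i 1 := by
    ext j
    simp only [Pi.single_apply]
    split_ifs <;> simp
  rw [hcast, diagonal_mulVec_single, dotProduct_single, mul_one]

lemma exists_eq_diagonal_mulVec_intCast {a v : ι → ℝ} (hv : ∀ i, ∃ z : ℤ, v i = a i * z) :
    ∃ n : ι → ℤ, v = diagonal a *ᵥ fun i => (n i : ℝ) := by
  choose n hn using hv
  exact ⟨n, funext fun i => by rw [mulVec_diagonal, hn i]⟩

theorem exists_eq_diagonal_mulVec_intCast_of_forall_symplectic_int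
    {a b : ι → ℝ} {c : ℝ} (hc : c ≠ 0) (hab : ∀ i, a i * b i = c) {x xt : ι → ℝ}
    (hcom : ∀ n nt : ι → ℤ, ∃ z : ℤ,
      xt ⬝ᵥ (diagonal a *ᵥ fun i => (n i : ℝ)) - x ⬝ᵥ (diagonal b *ᵥ fun i => (nt i : ℝ)) =
        c * z) :
    ∃ n nt : ι → ℤ,
      x = diagonal a *ᵥ (fun i => (n i : ℝ)) ∧ xt = diagonal b *ᵥ (fun i => (nt i : ℝ)) := by
  have ha : ∀ i, a i ≠ 0 := fun i h => hc (by rw [← hab i, h, zero_mul])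
  have hb : ∀ i, b i ≠ 0 := fun i h => hc (by rw [← hab i, h, mul_zero])
  have hx : ∀ i, ∃ z : ℤ, x i = a i * z := by
    intro i
    obtain ⟨z, hz⟩ := hcom 0 (Pi.single i 1)
    rw [dotProduct_mulVec_intCast_zero, dotProduct_diagonal_mulVec_intCast_single, ← hab i]
      at hz
    refine ⟨-z, mul_right_cancel₀ (hb i) ?_⟩
    push_cast
    linarith
  have hxt : ∀ i, ∃ z : ℤ, xt i = b i * z := by
    intro i
    obtain ⟨z, hz⟩ := hcom (Pi.single i 1) 0
    rw [dotProduct_mulVec_intCast_zero, dotProduct_diagonal_mulVec_intCast_single, ← hab i]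
      at hz
    refine ⟨z, mul_right_cancel₀ (ha i) ?_⟩
    linarith
  obtain ⟨n, rfl⟩ := exists_eq_diagonal_mulVec_intCast hx
  obtain ⟨nt, rfl⟩ := exists_eq_diagonal_mulVec_intCast hxt
  exact ⟨n, nt, rfl, rfl⟩

end DiagonalLattice

theorem modular_lattice_maximal_general
    {d : ℕ} (ℏ : ℝ) (hℏ : 0 < ℏ)
    (lam tlam : Matrix (Fin d) (Fin d) ℝ)
    (hlam : lam.IsDiag) (htlam : tlam.IsDiag)
    (hpair : lamᵀ * tlam = (2 * Real.pi * ℏ) • (1 : Matrix (Fin d) (Fin d) ℝ))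
    (x xt : Fin d → ℝ)
    (hcom : ∀ n nt : Fin d → ℤ, ∃ z : ℤ,
      xt ⬝ᵥ (lam.mulVec (fun i => (n i : ℝ)))
        - x ⬝ᵥ (tlam.mulVec (fun i => (nt i : ℝ))) = 2 * Real.pi * ℏ * z) :
    ∃ n nt : Fin d → ℤ,
      x = lam.mulVec (fun i => (n i : ℝ)) ∧ xt = tlam.mulVec (fun i => (nt i : ℝ)) := by
  obtain ⟨a, rfl⟩ : ∃ a, diagonal a = lam := ⟨_, hlam.diagonal_diag⟩
  obtain ⟨b, rfl⟩ : ∃ b, diagonal b = tlam := ⟨_, htlam.diagonal_diag⟩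
  have hab : ∀ i, a i * b i = 2 * Real.pi * ℏ := by
    rw [diagonal_transpose, diagonal_mul_diagonal, smul_one_eq_diagonal] at hpair
    exact congrFun (diagonal_injective hpair)
  exact exists_eq_diagonal_mulVec_intCast_of_forall_symplectic_int (by positivity) hab hcom

/-- The modular lattice `Λ = λℤ^d ⊕ λ̃ℤ^d` (λ, λ̃ diagonal invertible,
`λᵀλ̃ = 2πℏ·1`) is maximal: any phase-space vector `X = (x, xt)` with
`ω(X, K) ∈ 2πℏℤ` for all lattice points `K` lies itself in the lattice. -/
theorem modular_lattice_maximal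
    {d : ℕ} (hd : 0 < d) (ℏ : ℝ) (hℏ : 0 < ℏ)
    (lam tlam : Matrix (Fin d) (Fin d) ℝ)
    (hlam : lam.IsDiag) (htlam : tlam.IsDiag)
    (hlamU : IsUnit lam) (htlamU : IsUnit tlam)
    (hpair : lamᵀ * tlam = (2 * Real.pi * ℏ) • (1 : Matrix (Fin d) (Fin d) ℝ))
    (x xt : Fin d → ℝ)
    (hcom : ∀ n nt : Fin d → ℤ, ∃ z : ℤ,
      xt ⬝ᵥ (lam.mulVec (fun i => (n i : ℝ)))
        - x ⬝ᵥ (tlam.mulVec (fun i => (nt i : ℝ))) = 2 * Real.pi * ℏ * z) :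
    ∃ n nt : Fin d → ℤ,
      x = lam.mulVec (fun i => (n i : ℝ)) ∧ xt = tlam.mulVec (fun i => (nt i : ℝ)) :=
  modular_lattice_maximal_general ℏ hℏ lam tlam hlam htlam hpair x xt hcom
end

section
/- Hamilton's principal function S(X,t) = -ℏα(X) + ℏα(X₀) - ½ω(X₀,X) + ¼cot(½Ω(t-t₀))·G(X-X₀, X-X₀) satisfies the Hamilton–Jacobi equation ∂S/∂t + ½Ω·G^{-1}(∇S + A(X), ∇S + A(X)) = 0, where A_B(X) = ½X^Cω_{CB} + ℏ∂_Bα(X). -/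
open Matrix

private lemma hasFDerivAt_dotmul {ι : Type*} [Fintype ι] [DecidableEq ι]
    (a : ι → ℝ) (M : Matrix ι ι ℝ) (Y : ι → ℝ) :
    HasFDerivAt (fun Z : ι → ℝ => a ⬝ᵥ M.mulVec Z)
      (∑ i, ∑ j, (a i * M i j) • (ContinuousLinearMap.proj (R := ℝ) (φ := fun _ : ι => ℝ) j)) Y := by
  have : (fun Z : ι → ℝ => a ⬝ᵥ M.mulVec Z) = fun Z => ∑ i, ∑ j, a i * M i j * Z j := by
    funext Z
    simp [dotProduct, Matrix.mulVec, Finset.mul_sum, mul_assoc]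
  rw [this]
  apply HasFDerivAt.fun_sum
  intro i _
  apply HasFDerivAt.fun_sum
  intro j _
  exact ((ContinuousLinearMap.proj (R := ℝ) (φ := fun _ : ι => ℝ) j).hasFDerivAt).const_mul _

private lemma hasFDerivAt_quadform {ι : Type*} [Fintype ι] [DecidableEq ι]
    (a : ι → ℝ) (M : Matrix ι ι ℝ) (Y : ι → ℝ) :
    HasFDerivAt (fun Z : ι → ℝ => (Z - a) ⬝ᵥ M.mulVec (Z - a))
      (∑ i, ((Y i - a i) • (∑ j, M i j • (ContinuousLinearMap.proj (R := ℝ) (φ := fun _ : ι => ℝ) j))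
        + (∑ j, M i j * (Y j - a j)) • (ContinuousLinearMap.proj (R := ℝ) (φ := fun _ : ι => ℝ) i))) Y := by
  have : (fun Z : ι → ℝ => (Z - a) ⬝ᵥ M.mulVec (Z - a))
      = fun Z => ∑ i, ((Z i - a i) * (∑ j, M i j * (Z j - a j))) := by
    funext Z
    simp [dotProduct, Matrix.mulVec, Pi.sub_apply]
  rw [this]
  apply HasFDerivAt.fun_sum
  intro i _
  have h1 : HasFDerivAt (fun Z : ι → ℝ => Z i - a i)
      (ContinuousLinearMap.proj (R := ℝ) (φ := fun _ : ι => ℝ) i) Y :=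
    ((ContinuousLinearMap.proj (R := ℝ) (φ := fun _ : ι => ℝ) i).hasFDerivAt).sub_const _
  have h2 : HasFDerivAt (fun Z : ι → ℝ => ∑ j, M i j * (Z j - a j))
      (∑ j, M i j • (ContinuousLinearMap.proj (R := ℝ) (φ := fun _ : ι => ℝ) j)) Y := by
    apply HasFDerivAt.fun_sum
    intro j _
    exact (((ContinuousLinearMap.proj (R := ℝ) (φ := fun _ : ι => ℝ) j).hasFDerivAt).sub_const _).const_mul _
  exact h1.mul h2

private lemma alg_key (Ωv mv s co z1 z2 : ℝ) (hs : s ≠ 0) (hmv : mv ≠ 0) (hΩv : Ωv ≠ 0)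
    (hsc : s^2 + co^2 = 1) :
    (1/4)*((-(Ωv/2))/s^2)*((mv*Ωv)*z1^2 + (mv*Ωv)⁻¹*z2^2)
    + (1/2)*Ωv*( ((1/2)*z2 + (1/2)*(co/s)*((mv*Ωv)*z1)) * ((mv*Ωv)⁻¹ * ((1/2)*z2 + (1/2)*(co/s)*((mv*Ωv)*z1)))
        + ((-(1/2))*z1 + (1/2)*(co/s)*((mv*Ωv)⁻¹*z2)) * ((mv*Ωv) * ((-(1/2))*z1 + (1/2)*(co/s)*((mv*Ωv)⁻¹*z2)))) = 0 := by
  have hmΩ : mv*Ωv ≠ 0 := mul_ne_zero hmv hΩv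
  field_simp
  linear_combination (4*Ωv^2*mv^2*z1^2 + 4*z2^2) * hsc

private lemma alg_key2 (Ω m sn cs z1 z2 : ℝ) (hs : sn ≠ 0) (hm : m ≠ 0) (hΩ : Ω ≠ 0) :
    1 / 4 * ((-(sn * (1 / 2 * Ω) * sn) - cs * (cs * (1 / 2 * Ω))) / sn ^ 2) *
        (z1 * (m * Ω * z1) + z2 * ((m * Ω)⁻¹ * z2)) +
      1 / 2 * Ω *
        ((1 / 2 * z2 + 1 / 2 * (cs / sn) * (m * Ω * z1)) *
            ((m * Ω)⁻¹ * (1 / 2 * z2 + 1 / 2 * (cs / sn) * (m * Ω * z1))) +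
          (-(1 / 2 * z1) + 1 / 2 * (cs / sn) * ((m * Ω)⁻¹ * z2)) *
            (m * Ω * (-(1 / 2 * z1) + 1 / 2 * (cs / sn) * ((m * Ω)⁻¹ * z2)))) = 0 := by
  have hmΩ : m * Ω ≠ 0 := mul_ne_zero hm hΩ
  field_simp
  ring

private lemma final_combine {n : ℕ} (c1 c2 : ℝ) (a b e f : Fin n → ℝ)
    (h : ∀ k, c1 * (a k + b k) + c2 * (e k + f k) = 0) :
    c1 * ((∑ k, a k) + ∑ k, b k) + c2 * ((∑ k, e k) + ∑ k, f k) = 0 := by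
  rw [← Finset.sum_add_distrib, ← Finset.sum_add_distrib, Finset.mul_sum, Finset.mul_sum,
    ← Finset.sum_add_distrib]
  exact Finset.sum_eq_zero fun k _ => h k

private lemma sum_ite_mul {n : ℕ} (k : Fin n) (f : Fin n → ℝ) (c : ℝ) :
    (∑ x, (if x = k then f x else 0) * c) = f k * c := by
  have h : ∀ x : Fin n, (if x = k then f x else 0) * c = if x = k then f x * c else 0 := by
    intro x; split <;> simp
  simp only [h, Finset.sum_ite_eq', Finset.mem_univ, if_true]

/-- Hamilton's principal function
`S(X,t) = -ℏα(X) + ℏα(X₀) - ½ω(X₀,X) + ¼cot(½Ω(t-t₀))·G(X-X₀,X-X₀)`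
satisfies the Hamilton–Jacobi equation
`∂S/∂t + ½Ω·G⁻¹(∇S + A(X), ∇S + A(X)) = 0`,
where `A_B(X) = ½X^Cω_{CB} + ℏ∂_Bα(X)`. -/
theorem hamilton_jacobi_modular
    {d : ℕ} (hd : 0 < d) (m Ω ℏ t₀ : ℝ) (hm : 0 < m) (hΩ : 0 < Ω) (hℏ : 0 < ℏ)
    (X₀ : Fin d ⊕ Fin d → ℝ)
    (α : (Fin d ⊕ Fin d → ℝ) → ℝ) (hα : ContDiff ℝ (⊤ : ℕ∞) α) :
    letI ω : Matrix (Fin d ⊕ Fin d) (Fin d ⊕ Fin d) ℝ :=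
      Matrix.fromBlocks 0 (-1) 1 0
    letI G : Matrix (Fin d ⊕ Fin d) (Fin d ⊕ Fin d) ℝ :=
      Matrix.fromBlocks ((m * Ω) • 1) 0 0 ((m * Ω)⁻¹ • 1)
    letI S : (Fin d ⊕ Fin d → ℝ) → ℝ → ℝ := fun Y t =>
      -ℏ * α Y + ℏ * α X₀ - (1 / 2) * (X₀ ⬝ᵥ ω.mulVec Y)
        + (1 / 4) * (Real.cos ((1 / 2) * Ω * (t - t₀)) / Real.sin ((1 / 2) * Ω * (t - t₀)))
            * ((Y - X₀) ⬝ᵥ G.mulVec (Y - X₀))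
    letI gradS : (Fin d ⊕ Fin d → ℝ) → ℝ → Fin d ⊕ Fin d → ℝ := fun Y t B =>
      fderiv ℝ (fun Z => S Z t) Y (Pi.single B 1)
    letI A : (Fin d ⊕ Fin d → ℝ) → Fin d ⊕ Fin d → ℝ := fun Y =>
      (1 / 2 : ℝ) • Matrix.vecMul Y ω + ℏ • fun B => fderiv ℝ α Y (Pi.single B 1)
    ∀ (Y : Fin d ⊕ Fin d → ℝ) (t : ℝ), (∀ n : ℤ, Ω * (t - t₀) ≠ 2 * Real.pi * n) →
      deriv (fun s => S Y s) t
        + (1 / 2) * Ω * ((gradS Y t + A Y) ⬝ᵥ G⁻¹.mulVec (gradS Y t + A Y)) = 0 := by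
  intro Y t hn
  beta_reduce
  set ωm : Matrix (Fin d ⊕ Fin d) (Fin d ⊕ Fin d) ℝ := Matrix.fromBlocks 0 (-1) 1 0 with hωm
  set Gm : Matrix (Fin d ⊕ Fin d) (Fin d ⊕ Fin d) ℝ := Matrix.fromBlocks ((m * Ω) • 1) 0 0 ((m * Ω)⁻¹ • 1) with hGm
  have hmΩ : m * Ω ≠ 0 := mul_ne_zero hm.ne' hΩ.ne'
  -- sin ≠ 0
  have hsin : Real.sin (1 / 2 * Ω * (t - t₀)) ≠ 0 := by
    intro h
    rw [Real.sin_eq_zero_iff] at h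
    obtain ⟨n, hn'⟩ := h
    apply hn n
    have h2 : Ω * (t - t₀) = 2 * (1 / 2 * Ω * (t - t₀)) := by ring
    rw [h2, ← hn']
    ring
  set sn := Real.sin (1 / 2 * Ω * (t - t₀)) with hsn
  set cs := Real.cos (1 / 2 * Ω * (t - t₀)) with hcs
  set Q := (Y - X₀) ⬝ᵥ Gm.mulVec (Y - X₀) with hQ
  -- time derivative
  have hθ : HasDerivAt (fun s : ℝ => 1 / 2 * Ω * (s - t₀)) (1 / 2 * Ω) t := by
    simpa using ((hasDerivAt_id t).sub_const t₀).const_mul (1 / 2 * Ω)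
  have hratio := (hθ.cos.div hθ.sin hsin)
  have hder : deriv (fun s : ℝ => -ℏ * α Y + ℏ * α X₀ - 1 / 2 * (X₀ ⬝ᵥ ωm.mulVec Y)
      + 1 / 4 * (Real.cos (1 / 2 * Ω * (s - t₀)) / Real.sin (1 / 2 * Ω * (s - t₀))) * Q) t
      = 1 / 4 * (((-sn * (1 / 2 * Ω)) * sn - cs * (cs * (1 / 2 * Ω))) / sn ^ 2) * Q :=
    HasDerivAt.deriv (((hratio.const_mul (1 / 4)).mul_const Q).const_add
      (-ℏ * α Y + ℏ * α X₀ - 1 / 2 * (X₀ ⬝ᵥ ωm.mulVec Y)))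
  -- space derivative
  have hα' := (hα.differentiable (by simp) Y).hasFDerivAt
  have hlin := hasFDerivAt_dotmul X₀ ωm Y
  have hquad := hasFDerivAt_quadform X₀ Gm Y
  have hf : HasFDerivAt (fun Z : Fin d ⊕ Fin d → ℝ => -ℏ * α Z + ℏ * α X₀ - 1 / 2 * (X₀ ⬝ᵥ ωm.mulVec Z)
      + 1 / 4 * (cs / sn) * ((Z - X₀) ⬝ᵥ Gm.mulVec (Z - X₀)))
      ((-ℏ) • fderiv ℝ α Y
        - (1 / 2 : ℝ) • (∑ i, ∑ j, (X₀ i * ωm i j) • (ContinuousLinearMap.proj (R := ℝ) (φ := fun _ : Fin d ⊕ Fin d => ℝ) j))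
        + (1 / 4 * (cs / sn)) • (∑ i, ((Y i - X₀ i) • (∑ j, Gm i j • (ContinuousLinearMap.proj (R := ℝ) (φ := fun _ : Fin d ⊕ Fin d => ℝ) j))
            + (∑ j, Gm i j * (Y j - X₀ j)) • (ContinuousLinearMap.proj (R := ℝ) (φ := fun _ : Fin d ⊕ Fin d => ℝ) i)))) Y :=
    (((hα'.const_mul (-ℏ)).add_const (ℏ * α X₀)).sub (hlin.const_mul (1 / 2))).add
      (hquad.const_mul (1 / 4 * (cs / sn)))
  have hVfun : ((fun B : Fin d ⊕ Fin d => fderiv ℝ (fun Z : Fin d ⊕ Fin d → ℝ => -ℏ * α Z + ℏ * α X₀ - 1 / 2 * (X₀ ⬝ᵥ ωm.mulVec Z)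
        + 1 / 4 * (cs / sn) * ((Z - X₀) ⬝ᵥ Gm.mulVec (Z - X₀))) Y (Pi.single B 1))
      + ((1 / 2 : ℝ) • Matrix.vecMul Y ωm + ℏ • fun B => fderiv ℝ α Y (Pi.single B 1)))
      = Sum.elim
        (fun k => (1/2) * (Y (Sum.inr k) - X₀ (Sum.inr k)) + (1/2) * (cs/sn) * ((m*Ω) * (Y (Sum.inl k) - X₀ (Sum.inl k))))
        (fun k => (-(1/2)) * (Y (Sum.inl k) - X₀ (Sum.inl k)) + (1/2) * (cs/sn) * ((m*Ω)⁻¹ * (Y (Sum.inr k) - X₀ (Sum.inr k)))) := by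
    funext B
    simp only [Pi.add_apply, Pi.smul_apply, smul_eq_mul, hf.fderiv]
    simp only [ContinuousLinearMap.add_apply, ContinuousLinearMap.sub_apply,
      ContinuousLinearMap.smul_apply, ContinuousLinearMap.coe_sum', Finset.sum_apply,
      ContinuousLinearMap.proj_apply, smul_eq_mul, Pi.single_apply, mul_ite, mul_one, mul_zero,
      Finset.sum_ite_eq', Finset.mem_univ, if_true]
    cases B with
    | inl k =>
      simp only [hωm, hGm, Pi.sub_apply, Matrix.vecMul, Matrix.mulVec, dotProduct,
        Fintype.sum_sum_type, Matrix.fromBlocks_apply₁₁, Matrix.fromBlocks_apply₁₂,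
        Matrix.fromBlocks_apply₂₁, Matrix.fromBlocks_apply₂₂, Matrix.one_apply,
        Matrix.smul_apply, Matrix.neg_apply, Matrix.zero_apply, smul_eq_mul]
      simp only [mul_ite, ite_mul, mul_zero, zero_mul, mul_one, one_mul, neg_zero, neg_mul,
        mul_neg, Finset.sum_add_distrib, Finset.sum_neg_distrib, Finset.sum_const_zero,
        Finset.sum_ite_eq, Finset.sum_ite_eq', Finset.mem_univ, if_true, add_zero, zero_add,
        Sum.inl.injEq, Sum.inr.injEq, Sum.elim_inl, Sum.elim_inr, reduceCtorEq, if_false]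
      ring
    | inr k =>
      simp only [hωm, hGm, Pi.sub_apply, Matrix.vecMul, Matrix.mulVec, dotProduct,
        Fintype.sum_sum_type, Matrix.fromBlocks_apply₁₁, Matrix.fromBlocks_apply₁₂,
        Matrix.fromBlocks_apply₂₁, Matrix.fromBlocks_apply₂₂, Matrix.one_apply,
        Matrix.smul_apply, Matrix.neg_apply, Matrix.zero_apply, smul_eq_mul]
      simp only [mul_ite, ite_mul, mul_zero, zero_mul, mul_one, one_mul, neg_zero, neg_mul,
        mul_neg, Finset.sum_add_distrib, Finset.sum_neg_distrib, Finset.sum_const_zero,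
        Finset.sum_ite_eq, Finset.sum_ite_eq', Finset.mem_univ, if_true, add_zero, zero_add,
        Sum.inl.injEq, Sum.inr.injEq, Sum.elim_inl, Sum.elim_inr, reduceCtorEq, if_false]
      ring
  have hGinv : Gm⁻¹ = Matrix.fromBlocks ((m * Ω)⁻¹ • (1 : Matrix (Fin d) (Fin d) ℝ)) 0 0 ((m * Ω) • 1) := by
    apply Matrix.inv_eq_right_inv
    rw [hGm, Matrix.fromBlocks_multiply]
    simp only [Matrix.smul_mul, Matrix.mul_smul, smul_smul, Matrix.one_mul, Matrix.mul_one,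
      Matrix.zero_mul, Matrix.mul_zero, smul_zero, add_zero, zero_add,
      mul_inv_cancel₀ hmΩ, inv_mul_cancel₀ hmΩ, one_smul, Matrix.fromBlocks_one]
  rw [hder, hVfun, hGinv, hQ, hGm]
  simp only [dotProduct, Matrix.mulVec, Pi.sub_apply, Fintype.sum_sum_type,
    Matrix.fromBlocks_apply₁₁, Matrix.fromBlocks_apply₁₂, Matrix.fromBlocks_apply₂₁,
    Matrix.fromBlocks_apply₂₂, Matrix.one_apply, Matrix.smul_apply, Matrix.neg_apply,
    Matrix.zero_apply, smul_eq_mul, Sum.elim_inl, Sum.elim_inr, Sum.inl.injEq, Sum.inr.injEq,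
    reduceCtorEq, mul_ite, ite_mul, mul_zero, zero_mul, mul_one, one_mul, neg_zero, neg_mul,
    mul_neg, Finset.sum_add_distrib, Finset.sum_neg_distrib, Finset.sum_const_zero,
    Finset.sum_ite_eq, Finset.sum_ite_eq', Finset.mem_univ, if_true, add_zero, zero_add, if_false]
  exact final_combine _ _ _ _ _ _ fun k => alg_key2 Ω m sn cs _ _ hsin hm.ne' hΩ.ne'
end
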